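/- Let b, c > 0 and u, v ∈ [0,1). Define, for y ≥ 0, φ(y) = sqrt(1−v) · ((1−u) + sqrt(1−v) tanh(b c y sqrt(1−v))) / ((1−u) tanh(b c y sqrt(1−v)) + sqrt(1−v)) and X(y) = 1 − φ(y). Then X(0) = u and X is differentiable on [0,∞) with X′(y) = 2 b c ( X(y)²/2 − X(y) + v/2 ) for all y ≥ 0. -/

import Mathlib

/-! With `s = √(1 - v)`, `a = 1 - u` and `k = b c s`, the function `ψ = φ / s` is the image of
`tanh (k y)` under the Möbius map `t ↦ (a + s t) / (a t + s)`. That map preserves the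
equation `ψ' = k (1 - ψ²)` solved by `tanh (k y)`, because `dψ/dt = (s² - a²) / (a t + s)²`
while `1 - ψ² = (s² - a²) (1 - t²) / (a t + s)²`. Hence `X = 1 - s ψ` satisfies
`X' = -b c s² (1 - ψ²) = b c ((1 - X)² - (1 - v))`, the Riccati equation. The denominator
stays positive on `y ≥ 0` since `tanh ≥ 0` there. -/

noncomputable section

/-- `X(y) = 1 - φ(y)`, the generating-function value
`E[u^{U_{ii}(y)} v^{U_{i,i+1}(y)}]` of the two-type limiting branching process
with parameters `b`, `c`. -/
def Xfun (b c u v y : ℝ) : ℝ :=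
  1 - Real.sqrt (1 - v) *
      ((1 - u) + Real.sqrt (1 - v) * Real.tanh (b * c * y * Real.sqrt (1 - v))) /
    ((1 - u) * Real.tanh (b * c * y * Real.sqrt (1 - v)) + Real.sqrt (1 - v))

namespace Real

theorem hasDerivAt_tanh (x : ℝ) : HasDerivAt tanh (1 - tanh x ^ 2) x := by
  have hquot := (hasDerivAt_sinh x).div (hasDerivAt_cosh x) (cosh_pos x).ne'
  rw [show sinh / cosh = tanh from funext fun y => (tanh_eq_sinh_div_cosh y).symm] at hquot
  refine hquot.congr_deriv ?_
  rw [tanh_eq_sinh_div_cosh]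
  field_simp

theorem tanh_nonneg {x : ℝ} (hx : 0 ≤ x) : 0 ≤ tanh x := by
  rw [tanh_eq_sinh_div_cosh]
  exact div_nonneg (sinh_nonneg_iff.mpr hx) (cosh_pos x).le

end Real

theorem HasDerivAt.tanh {f : ℝ → ℝ} {f' x : ℝ} (hf : HasDerivAt f f' x) :
    HasDerivAt (fun y => Real.tanh (f y)) ((1 - Real.tanh (f x) ^ 2) * f') x :=
  (Real.hasDerivAt_tanh (f x)).comp x hf

theorem HasDerivAt.moebius_of_tanh_ode {f : ℝ → ℝ} {k y : ℝ}
    (hf : HasDerivAt f (k * (1 - f y ^ 2)) y) (a s : ℝ) (hden : a * f y + s ≠ 0) :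
    HasDerivAt (fun x => (a + s * f x) / (a * f x + s))
      (k * (1 - ((a + s * f y) / (a * f y + s)) ^ 2)) y := by
  refine (((hf.const_mul s).const_add a).div ((hf.const_mul a).add_const s) hden).congr_deriv ?_
  rw [div_pow, one_sub_div (pow_ne_zero 2 hden), mul_div_assoc']
  congr 1
  ring

/-- `X(0) = u` and `X` solves the backward Kolmogorov (Riccati)
equation `X′(y) = 2bc (X(y)²/2 - X(y) + v/2)` on `[0, ∞)`. -/
theorem Xfun_solves_riccati (b c u v : ℝ) (hb : 0 < b) (hc : 0 < c)
    (hu : u ∈ Set.Ico (0 : ℝ) 1) (hv : v ∈ Set.Ico (0 : ℝ) 1) :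
    Xfun b c u v 0 = u ∧
    ∀ y : ℝ, 0 ≤ y →
      HasDerivWithinAt (Xfun b c u v)
        (2 * b * c * (Xfun b c u v y ^ 2 / 2 - Xfun b c u v y + v / 2))
        (Set.Ici 0) y := by
  have hs : 0 < √(1 - v) := Real.sqrt_pos.mpr (by linarith [hv.2])
  have hs_sq : √(1 - v) ^ 2 = 1 - v := Real.sq_sqrt (by linarith [hv.2])
  have ha : 0 < 1 - u := by linarith [hu.2]
  refine ⟨by simp [Xfun, mul_div_cancel_left₀ _ hs.ne'], fun y hy => ?_⟩
  set s := √(1 - v)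
  set f := fun x => Real.tanh (b * c * x * s)
  have hf : HasDerivAt f (b * c * s * (1 - f y ^ 2)) y := by
    have hlin : HasDerivAt (fun x => b * c * x * s) (b * c * s) y := by
      simpa using ((hasDerivAt_id y).const_mul (b * c)).mul_const s
    exact hlin.tanh.congr_deriv (mul_comm _ _)
  have hden : (1 - u) * f y + s ≠ 0 := by
    have : 0 ≤ f y := Real.tanh_nonneg (by positivity)
    positivity
  have hX : Xfun b c u v = fun x => 1 - s * ((1 - u + s * f x) / ((1 - u) * f x + s)) := by
    funext x; simp only [Xfun, mul_div_assoc, f, s]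
  rw [hX]
  refine (((hf.moebius_of_tanh_ode _ _ hden).const_mul s).const_sub 1).hasDerivWithinAt
    |>.congr_deriv ?_
  linear_combination (-(b * c)) * hs_sq

end
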